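/- Let (b_k) be a sequence of nonnegative real numbers with ∑ b_k < ∞ such that b_k ≤ ∑_{n=k+1}^∞ b_n for every k. Then there exists a sequence of signs (δ_k) ∈ {1,-1}^ℕ with ∑_{k=1}^∞ δ_k b_k = 0. -/

import Mathlib

/-!
Choose the signs greedily: each term is subtracted when the current partial sum is nonnegative
and added otherwise. Tail domination keeps every partial sum `S n` within the tail
`∑_{k ≥ n} b k`: if `|S n| ≤ b n + R` with `b n ≤ R`, then moving by `b n` towards `0` lands in
`[-R, R]`. As the tails tend to `0`, so do the partial sums.
-/

open Finset

noncomputable section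

def signTowardZero (s : ℝ) : ℝ := if 0 ≤ s then -1 else 1

theorem signTowardZero_eq_one_or_neg_one (s : ℝ) :
    signTowardZero s = 1 ∨ signTowardZero s = -1 := by
  unfold signTowardZero
  split_ifs
  · exact Or.inr rfl
  · exact Or.inl rfl

theorem abs_signTowardZero_mul (s x : ℝ) : |signTowardZero s * x| = |x| := by
  unfold signTowardZero
  split_ifs <;> simp

theorem abs_add_signTowardZero_mul_le {s x t : ℝ} (hxt : x ≤ t)
    (hs : |s| ≤ x + t) : |s + signTowardZero s * x| ≤ t := by
  unfold signTowardZero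
  rw [abs_le] at hs ⊢
  split_ifs with h
  · constructor <;> linarith
  · constructor <;> linarith

def greedySum (b : ℕ → ℝ) : ℕ → ℝ
  | 0 => 0
  | n + 1 => greedySum b n + signTowardZero (greedySum b n) * b n

theorem greedySum_eq_sum_range (b : ℕ → ℝ) (n : ℕ) :
    greedySum b n = ∑ k ∈ range n, signTowardZero (greedySum b k) * b k := by
  induction n with
  | zero => rfl
  | succ n ih => rw [sum_range_succ, ← ih, greedySum]

theorem tsum_nat_add_eq_add_tsum_nat_add_succ {b : ℕ → ℝ} (hsum : Summable b) (n : ℕ) :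
    ∑' j, b (j + n) = b n + ∑' j, b (j + (n + 1)) := by
  rw [((summable_nat_add_iff n).2 hsum).tsum_eq_zero_add]
  simp only [zero_add, add_right_comm _ 1 n, add_assoc]

section TailDomination

variable {b : ℕ → ℝ} (hnonneg : ∀ k, 0 ≤ b k) (hsum : Summable b)
  (hdom : ∀ k : ℕ, b k ≤ ∑' n : ℕ, b (n + k + 1))
include hnonneg hsum hdom

theorem abs_greedySum_le_tsum_nat_add (n : ℕ) : |greedySum b n| ≤ ∑' j, b (j + n) := by
  induction n with
  | zero => simpa [greedySum] using tsum_nonneg fun j => hnonneg j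
  | succ n ih =>
    rw [tsum_nat_add_eq_add_tsum_nat_add_succ hsum] at ih
    exact abs_add_signTowardZero_mul_le (hdom n) ih

theorem hasSum_signTowardZero_greedySum_mul_zero :
    HasSum (fun k => signTowardZero (greedySum b k) * b k) 0 := by
  have hsummable : Summable fun k => signTowardZero (greedySum b k) * b k :=
    hsum.of_norm_bounded fun k => by
      rw [Real.norm_eq_abs, abs_signTowardZero_mul, abs_of_nonneg (hnonneg k)]
  rw [hsummable.hasSum_iff_tendsto_nat]
  simp only [← greedySum_eq_sum_range]
  exact squeeze_zero_norm (abs_greedySum_le_tsum_nat_add hnonneg hsum hdom)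
    (tendsto_sum_nat_add b)

end TailDomination

end

theorem signs_exist_of_nonneg_tail_domination (b : ℕ → ℝ)
    (hnonneg : ∀ k, 0 ≤ b k) (hsum : Summable b)
    (hdom : ∀ k : ℕ, b k ≤ ∑' n : ℕ, b (n + k + 1)) :
    ∃ δ : ℕ → ℝ, (∀ k, δ k = 1 ∨ δ k = -1) ∧
      ∑' k : ℕ, δ k * b k = 0 :=
  ⟨fun k => signTowardZero (greedySum b k), fun _ => signTowardZero_eq_one_or_neg_one _,
    (hasSum_signTowardZero_greedySum_mul_zero hnonneg hsum hdom).tsum_eq⟩
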